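/- arXiv:1807.04208 — 2 statements merged into one kernel-verified Lean document; each statement's English description precedes it below -/
import Mathlib

section
/- Consider the block matrix A = [[α, xᵀ, wᵀ],[y, B, O],[z, Oᵀ, C]] where B and C are square matrices, O denotes a zero block, and α is a scalar. If xᵀ is not in the row space of B and y is not in the column space of B, then rank(A) = rank(B) + rank(C) + 2. -/
/-!
The first row `(α, xᵀ, wᵀ)` of `A` is not in the span of the other rows: restricting to the
columns of the `B` block would put `x` in the row space of `B`. Deleting that row therefore lowers
the rank by exactly one. The same argument applied to the transpose, with `y`, removes the first
column and leaves the block diagonal matrix `diag(B, C)`, whose rank is `rank B + rank C`.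
-/

open Matrix

theorem Submodule.finrank_span_insert_of_notMem {K V : Type*} [Field K] [AddCommGroup V]
    [Module K V] {s : Set V} [FiniteDimensional K (span K s)] {v : V} (hv : v ∉ span K s) :
    Module.finrank K (span K (insert v s)) = Module.finrank K (span K s) + 1 := by
  have hv0 : v ≠ 0 := fun h => hv (h ▸ zero_mem _)
  have hdisj : Disjoint (span K s) (K ∙ v) := (disjoint_span_singleton' hv0).mpr hv
  rw [span_insert, sup_comm, ← add_zero (Module.finrank K ↥(span K s ⊔ K ∙ v)),
    ← finrank_bot K V, ← hdisj.eq_bot, finrank_sup_add_finrank_inf_eq, finrank_span_singleton hv0]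

theorem Submodule.notMem_span_range_of_map {R M M' ι : Type*} [Semiring R] [AddCommMonoid M]
    [Module R M] [AddCommMonoid M'] [Module R M'] {f : M →ₗ[R] M'} {p : Submodule R M'}
    {s : ι → M} {v : M} (hv : f v ∉ p) (hs : ∀ i, f (s i) ∈ p) : v ∉ span R (Set.range s) := by
  intro h
  have hmap : (span R (Set.range s)).map f ≤ p := by
    rw [map_span_le]
    rintro _ ⟨i, rfl⟩
    exact hs i
  exact hv (hmap ⟨v, h, rfl⟩)

theorem LinearMap.finrank_range_prodMap {K V V' W W' : Type*} [Field K] [AddCommGroup V]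
    [Module K V] [AddCommGroup V'] [Module K V'] [AddCommGroup W] [Module K W] [AddCommGroup W']
    [Module K W'] [FiniteDimensional K V] [FiniteDimensional K W]
    (f : V →ₗ[K] V') (g : W →ₗ[K] W') :
    Module.finrank K (f.prodMap g).range = Module.finrank K f.range + Module.finrank K g.range := by
  have hinj : Function.Injective (f.range.subtype.prodMap g.range.subtype) :=
    Prod.map_injective.mpr ⟨Subtype.val_injective, Subtype.val_injective⟩
  rw [← Module.finrank_prod, ← finrank_range_of_inj hinj, range_prodMap, range_prodMap,
    Submodule.range_subtype, Submodule.range_subtype]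

namespace Matrix

variable {K ι m n : Type*} [Field K]

theorem rank_fromBlocks_zero_zero {m' n' : Type*} [Fintype m] [Fintype n] [Fintype m']
    [Fintype n'] [DecidableEq n] [DecidableEq n'] (A : Matrix m n K) (D : Matrix m' n' K) :
    (fromBlocks A 0 0 D).rank = A.rank + D.rank := by
  have htoLin : toLin ((Pi.basisFun K n).prod (Pi.basisFun K n'))
      ((Pi.basisFun K m).prod (Pi.basisFun K m')) (fromBlocks A 0 0 D) =
      (toLin' A).prodMap (toLin' D) := by
    apply (LinearMap.toMatrix ((Pi.basisFun K n).prod (Pi.basisFun K n'))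
      ((Pi.basisFun K m).prod (Pi.basisFun K m'))).injective
    rw [LinearMap.toMatrix_toLin]
    ext (i | i) (j | j) <;> simp [LinearMap.toMatrix_apply]
  rw [rank_eq_finrank_range_toLin _ ((Pi.basisFun K m).prod (Pi.basisFun K m'))
    ((Pi.basisFun K n).prod (Pi.basisFun K n')), htoLin, LinearMap.finrank_range_prodMap]
  rfl

variable [Fintype ι] [Unique ι] [Fintype m] [Fintype n]

theorem rank_fromRows_replicateRow_of_notMem {r : n → K} {M : Matrix m n K}
    (hr : r ∉ Submodule.span K (Set.range M)) :
    (fromRows (replicateRow ι r) M).rank = M.rank + 1 := by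
  have hrows : Set.range (fromRows (replicateRow ι r) M).row = insert r (Set.range M.row) := by
    rw [Set.insert_eq, ← Set.range_const (ι := ι)]
    exact Set.Sum.elim_range _ _
  rw [rank_eq_finrank_span_row, rank_eq_finrank_span_row, hrows]
  exact Submodule.finrank_span_insert_of_notMem hr

theorem rank_fromCols_replicateCol_of_notMem {c : m → K} {M : Matrix m n K}
    (hc : c ∉ Submodule.span K (Set.range Mᵀ)) :
    (fromCols (replicateCol ι c) M).rank = M.rank + 1 := by
  rw [← rank_transpose, transpose_fromCols, transpose_replicateCol,
    rank_fromRows_replicateRow_of_notMem hc, rank_transpose]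

end Matrix

/-- A = [[α, xᵀ, wᵀ],[y, B, 0],[z, 0, C]]. If xᵀ ∉ rowspace(B) and
y ∉ colspace(B) then rank(A) = rank(B) + rank(C) + 2. -/
theorem stmt_7 {F : Type*} [Field F] {m k : ℕ}
    (B : Matrix (Fin m) (Fin m) F) (C : Matrix (Fin k) (Fin k) F)
    (x y : Fin m → F) (w z : Fin k → F) (α : F)
    (A : Matrix (Fin 1 ⊕ (Fin m ⊕ Fin k)) (Fin 1 ⊕ (Fin m ⊕ Fin k)) F)
    (hA : A = Matrix.fromBlocks (Matrix.of fun _ _ => α)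
      (Matrix.of fun _ j => Sum.elim x w j)
      (Matrix.of fun i _ => Sum.elim y z i)
      (Matrix.fromBlocks B 0 0 C))
    (hx : x ∉ Submodule.span F (Set.range B))
    (hy : y ∉ Submodule.span F (Set.range Bᵀ)) :
    A.rank = B.rank + C.rank + 2 := by
  have hA' : A = fromRows (replicateRow (Fin 1) (Sum.elim (fun _ => α) (Sum.elim x w)))
      (fromCols (replicateCol (Fin 1) (Sum.elim y z)) (fromBlocks B 0 0 C)) := by
    subst hA
    ext (i | i) (j | j) <;> rfl
  have hrow : Sum.elim (fun _ => α) (Sum.elim x w) ∉ Submodule.span F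
      (Set.range (fromCols (replicateCol (Fin 1) (Sum.elim y z)) (fromBlocks B 0 0 C))) := by
    refine Submodule.notMem_span_range_of_map
      (f := LinearMap.funLeft F F (Sum.inr ∘ Sum.inl)) hx ?_
    rintro (i | i)
    · exact Submodule.subset_span ⟨i, rfl⟩
    · exact zero_mem _
  have hcol : Sum.elim y z ∉ Submodule.span F (Set.range (fromBlocks B 0 0 C)ᵀ) := by
    refine Submodule.notMem_span_range_of_map (f := LinearMap.funLeft F F Sum.inl) hy ?_
    rintro (i | i)
    · exact Submodule.subset_span ⟨i, rfl⟩
    · exact zero_mem _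
  rw [hA', rank_fromRows_replicateRow_of_notMem hrow, rank_fromCols_replicateCol_of_notMem hcol,
    rank_fromBlocks_zero_zero]
end

section
/- Consider the block matrix A = [[B, x, O],[yᵀ, α, wᵀ],[Oᵀ, z, C]] with B, C square and O zero blocks. Suppose yᵀ is in the row space of B but x is not in the column space of B. If wᵀ is in the row space of C, then rank(A) = rank(B) + rank(C) + 1; if wᵀ is not in the row space of C, then rank(A) = rank(B) + rank(C) + 2. -/
/-!
Reassociating the columns as `(Fin m ⊕ Fin 1) ⊕ Fin k` makes `A` block lower triangular, with
diagonal blocks `[B | x]` and `[wᵀ; C]`. Since `x` is not a combination of the columns of `B`,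
some `d` has `dᵀ B = 0` and `dᵀ x = 1`, so the row space of `[B | x]` is `rowspace B × F`; with
`y ∈ rowspace B` it contains the off-diagonal rows `(yᵀ, α)` and `(0, z_j)`. Row operations clear
them, hence `rank A = rank [B | x] + rank [wᵀ; C] = (rank B + 1) + rank C + [w ∉ rowspace C]`.
-/

open Matrix

theorem Submodule.finrank_prod {K V W : Type*} [Field K] [AddCommGroup V] [Module K V]
    [AddCommGroup W] [Module K W] [FiniteDimensional K V] [FiniteDimensional K W]
    (p : Submodule K V) (q : Submodule K W) :
    Module.finrank K (p.prod q) = Module.finrank K p + Module.finrank K q := by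
  have hdisj : p.map (LinearMap.inl K V W) ⊓ q.map (LinearMap.inr K V W) = ⊥ :=
    (LinearMap.disjoint_inl_inr.mono LinearMap.map_le_range LinearMap.map_le_range).eq_bot
  have h := Submodule.finrank_sup_add_finrank_inf_eq (p.map (LinearMap.inl K V W))
    (q.map (LinearMap.inr K V W))
  rwa [hdisj, finrank_bot, add_zero, ← LinearMap.prod_eq_sup_map,
    ← (p.equivMapOfInjective _ LinearMap.inl_injective).finrank_eq,
    ← (q.equivMapOfInjective _ LinearMap.inr_injective).finrank_eq] at h

namespace Matrix

variable {F : Type*} [Field F] {m n m₁ m₂ n₁ n₂ ι : Type*}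

theorem rank_eq_finrank_span_range [Fintype m] [Fintype n] (A : Matrix m n F) :
    A.rank = Module.finrank F (Submodule.span F (Set.range A)) :=
  rank_eq_finrank_span_row A

theorem rank_fromBlocks_zero_zero_s11 [Fintype m₁] [Fintype m₂] [Fintype n₁] [Fintype n₂]
    (M : Matrix m₁ n₁ F) (D : Matrix m₂ n₂ F) :
    (fromBlocks M 0 0 D).rank = M.rank + D.rank := by
  let e := LinearEquiv.sumArrowLequivProdArrow n₁ n₂ F F
  have hrows : e ∘ (fromBlocks M 0 0 D).row =
      Sum.elim (LinearMap.inl F _ _ ∘ M.row) (LinearMap.inr F _ _ ∘ D.row) := by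
    funext i
    rcases i with i | i <;> rfl
  rw [rank_eq_finrank_span_row, ← e.finrank_map_eq, Submodule.map_span, ← Set.range_comp,
    LinearEquiv.coe_coe, hrows, Set.Sum.elim_range, Set.range_comp, Set.range_comp,
    LinearMap.span_inl_union_inr, Submodule.finrank_prod, rank_eq_finrank_span_row,
    rank_eq_finrank_span_row]

theorem rank_fromBlocks_zero₁₂_of_mem_span [Fintype m₁] [Fintype m₂] [Fintype n₁] [Fintype n₂]
    [DecidableEq m₁] [DecidableEq m₂]
    (M : Matrix m₁ n₁ F) (Y : Matrix m₂ n₁ F) (D : Matrix m₂ n₂ F)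
    (hY : ∀ i, Y i ∈ Submodule.span F (Set.range M)) :
    (fromBlocks M 0 Y D).rank = M.rank + D.rank := by
  choose G hG using fun i => (range_vecMulLinear M).ge (hY i)
  have hGM : of G * M = Y := funext hG
  have hfactor : fromBlocks M 0 Y D =
      (fromBlocks 1 0 (of G) 1 : Matrix (m₁ ⊕ m₂) (m₁ ⊕ m₂) F) * fromBlocks M 0 0 D := by
    simp [fromBlocks_multiply, hGM]
  rw [hfactor, rank_mul_eq_right_of_isUnit_det _ _ (by simp), rank_fromBlocks_zero_zero_s11]

theorem rank_fromRows [Fintype m₁] [Fintype m₂] [Fintype n]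
    (A₁ : Matrix m₁ n F) (A₂ : Matrix m₂ n F) :
    (fromRows A₁ A₂).rank =
      Module.finrank F ↥(Submodule.span F (Set.range A₁) ⊔ Submodule.span F (Set.range A₂)) := by
  rw [rank_eq_finrank_span_row, ← Submodule.span_union]
  exact congrArg (fun s => Module.finrank F (Submodule.span F s)) (Set.Sum.elim_range A₁ A₂)

theorem span_range_replicateRow [Nonempty ι] (w : n → F) :
    Submodule.span F (Set.range (replicateRow ι w)) = Submodule.span F {w} :=
  congrArg _ Set.range_const

theorem rank_fromRows_replicateRow_of_mem [Fintype m] [Fintype n] [Fintype ι] [Nonempty ι]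
    {C : Matrix m n F} {w : n → F} (hw : w ∈ Submodule.span F (Set.range C)) :
    (fromRows (replicateRow ι w) C).rank = C.rank := by
  rw [rank_fromRows, span_range_replicateRow,
    sup_eq_right.mpr ((Submodule.span_singleton_le_iff_mem _ _).mpr hw),
    rank_eq_finrank_span_range]

theorem rank_fromRows_replicateRow_of_notMem_s11 [Fintype m] [Fintype n] [Fintype ι] [Nonempty ι]
    {C : Matrix m n F} {w : n → F} (hw : w ∉ Submodule.span F (Set.range C)) :
    (fromRows (replicateRow ι w) C).rank = C.rank + 1 := by
  rw [rank_fromRows, span_range_replicateRow, sup_comm, Submodule.finrank_sup_span_singleton hw,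
    rank_eq_finrank_span_range]

theorem rank_fromCols_replicateCol_of_notMem_s11 [Fintype m] [Fintype n] [Fintype ι] [Nonempty ι]
    {B : Matrix m n F} {x : m → F} (hx : x ∉ Submodule.span F (Set.range Bᵀ)) :
    (fromCols B (replicateCol ι x)).rank = B.rank + 1 := by
  rw [← rank_transpose, transpose_fromCols, transpose_replicateCol, rank_fromRows,
    span_range_replicateRow, Submodule.finrank_sup_span_singleton hx, ← rank_transpose B,
    rank_eq_finrank_span_range]

theorem vecMul_replicateCol [Fintype m] (v x : m → F) :
    v ᵥ* replicateCol ι x = fun _ => v ⬝ᵥ x :=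
  rfl

theorem exists_vecMul_eq_zero_dotProduct_eq_one [Fintype m] [DecidableEq m]
    {B : Matrix m n F} {x : m → F} (hx : x ∉ Submodule.span F (Set.range Bᵀ)) :
    ∃ d : m → F, d ᵥ* B = 0 ∧ d ⬝ᵥ x = 1 := by
  obtain ⟨f, hfx, hf⟩ := Submodule.exists_dual_map_eq_bot_of_notMem hx inferInstance
  set d₀ : m → F := fun i => f fun j => if i = j then 1 else 0
  have hf_apply (u : m → F) : f u = u ⬝ᵥ d₀ := f.pi_apply_eq_sum_univ u
  refine ⟨(f x)⁻¹ • d₀, ?_, ?_⟩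
  · ext j
    have hj : Bᵀ j ⬝ᵥ d₀ = 0 := by
      rw [← hf_apply, ← Submodule.mem_bot F, ← hf]
      exact Submodule.mem_map_of_mem (Submodule.subset_span ⟨j, rfl⟩)
    rw [smul_vecMul, ← mulVec_transpose, Pi.smul_apply, Pi.zero_apply]
    exact (congrArg _ hj).trans (smul_zero _)
  · rw [smul_dotProduct, dotProduct_comm, ← hf_apply, smul_eq_mul, inv_mul_cancel₀ hfx]

theorem sumElim_mem_span_range_fromCols_replicateCol [Fintype m] [DecidableEq m]
    {B : Matrix m n F} {x : m → F} (hx : x ∉ Submodule.span F (Set.range Bᵀ))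
    {v : n → F} (hv : v ∈ Submodule.span F (Set.range B)) (t : F) :
    Sum.elim v (fun _ : ι => t) ∈
      Submodule.span F (Set.range (fromCols B (replicateCol ι x))) := by
  obtain ⟨d, hdB, hdx⟩ := exists_vecMul_eq_zero_dotProduct_eq_one hx
  obtain ⟨u, rfl⟩ : v ∈ LinearMap.range B.vecMulLinear := (range_vecMulLinear B).symm ▸ hv
  have hrow : (u + (t - u ⬝ᵥ x) • d) ᵥ* fromCols B (replicateCol ι x) =
      Sum.elim (u ᵥ* B) (fun _ : ι => t) := by
    rw [vecMul_fromCols, add_vecMul, smul_vecMul, hdB, smul_zero, add_zero, vecMul_replicateCol,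
      add_dotProduct, smul_dotProduct, hdx, smul_eq_mul, mul_one, add_sub_cancel]
  rw [vecMulLinear_apply, ← hrow]
  exact (range_vecMulLinear _).le ⟨_, rfl⟩

end Matrix

/-- A = [[B, x, 0],[yᵀ, α, wᵀ],[0, z, C]]. Suppose yᵀ ∈ rowspace(B) but
x ∉ colspace(B). If wᵀ ∈ rowspace(C) then rank(A) = rank(B) + rank(C) + 1; if
wᵀ ∉ rowspace(C) then rank(A) = rank(B) + rank(C) + 2. -/
theorem stmt_11 {F : Type*} [Field F] {m k : ℕ}
    (B : Matrix (Fin m) (Fin m) F) (C : Matrix (Fin k) (Fin k) F)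
    (x y : Fin m → F) (w z : Fin k → F) (α : F)
    (A : Matrix (Fin m ⊕ (Fin 1 ⊕ Fin k)) (Fin m ⊕ (Fin 1 ⊕ Fin k)) F)
    (hA : A = Matrix.fromBlocks B
      (Matrix.of fun i j => Sum.elim (fun (_ : Fin 1) => x i) (fun (_ : Fin k) => (0 : F)) j)
      (Matrix.of fun i j => Sum.elim (fun (_ : Fin 1) => y j) (fun (_ : Fin k) => (0 : F)) i)
      (Matrix.fromBlocks (Matrix.of fun (_ : Fin 1) (_ : Fin 1) => α)
        (Matrix.of fun (_ : Fin 1) j => w j) (Matrix.of fun i (_ : Fin 1) => z i) C))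
    (hx : x ∉ Submodule.span F (Set.range Bᵀ))
    (hy : y ∈ Submodule.span F (Set.range B)) :
    (w ∈ Submodule.span F (Set.range C) → A.rank = B.rank + C.rank + 1) ∧
    (w ∉ Submodule.span F (Set.range C) → A.rank = B.rank + C.rank + 2) := by
  set Y : Matrix (Fin 1 ⊕ Fin k) (Fin m ⊕ Fin 1) F :=
    fromRows (replicateRow (Fin 1) (Sum.elim y fun _ => α)) (fromCols 0 (replicateCol (Fin 1) z))
  have hblocks : A.submatrix (Equiv.refl _) (Equiv.sumAssoc _ _ _) =
      fromBlocks (fromCols B (replicateCol (Fin 1) x)) 0 Y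
        (fromRows (replicateRow (Fin 1) w) C) := by
    subst hA
    ext (i | i | i) ((j | j) | j) <;> simp [Y]
  have hY (i) : Y i ∈ Submodule.span F (Set.range (fromCols B (replicateCol (Fin 1) x))) := by
    rcases i with i | j
    · exact sumElim_mem_span_range_fromCols_replicateCol hx hy α
    · exact sumElim_mem_span_range_fromCols_replicateCol hx (zero_mem _) (z j)
  have hrank : A.rank = B.rank + 1 + (fromRows (replicateRow (Fin 1) w) C).rank := by
    rw [← rank_submatrix A (Equiv.refl _) (Equiv.sumAssoc _ _ _), hblocks,
      rank_fromBlocks_zero₁₂_of_mem_span _ _ _ hY, rank_fromCols_replicateCol_of_notMem_s11 hx]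
  refine ⟨fun hw => ?_, fun hw => ?_⟩
  · rw [hrank, rank_fromRows_replicateRow_of_mem hw]
    ring
  · rw [hrank, rank_fromRows_replicateRow_of_notMem_s11 hw]
    ring
end
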